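/- If P and Q are orthogonal projectors on a real inner product space with ranges of equal finite dimension k, then ‖(I − P)Q‖ = ‖P − Q‖ in operator norm, provided ‖P − Q‖ < 1. -/
import Mathlib

open Matrix

section Aux

variable {H : Type*} [NormedAddCommGroup H] [InnerProductSpace ℝ H]
  [FiniteDimensional ℝ H]

local notation "⟪" x ", " y "⟫" => @inner ℝ _ _ x y

/-- A self-adjoint idempotent is a contraction. -/
lemma aux_proj_apply_norm_le (R : H →L[ℝ] H) (hidem : R * R = R)
    (hsa : IsSelfAdjoint R) (x : H) : ‖R x‖ ≤ ‖x‖ := by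
  have hsym : (R : H →ₗ[ℝ] H).IsSymmetric := hsa.isSymmetric
  have h1 : ⟪R x, R x⟫ = ⟪x, R (R x)⟫ := hsym x (R x)
  have h2 : R (R x) = R x := by
    have := congrArg (fun T : H →L[ℝ] H => T x) hidem
    simpa using this
  rw [h2] at h1
  have h3 : ‖R x‖ ^ 2 ≤ ‖x‖ * ‖R x‖ := by
    rw [← real_inner_self_eq_norm_sq, h1]
    exact real_inner_le_norm x (R x)
  rcases le_or_gt ‖R x‖ 0 with h | h
  · exact h.trans (norm_nonneg x)
  · nlinarith

lemma aux_proj_norm_le_one (R : H →L[ℝ] H) (hidem : R * R = R)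
    (hsa : IsSelfAdjoint R) : ‖R‖ ≤ 1 := by
  refine ContinuousLinearMap.opNorm_le_bound R zero_le_one (fun x => ?_)
  simpa using aux_proj_apply_norm_le R hidem hsa x

/-- A nonnegative self-adjoint operator on a finite-dimensional real
inner product space attains its norm as an eigenvalue. -/
lemma aux_top_eigenvector (T : H →L[ℝ] H) (hT : IsSelfAdjoint T)
    (hpos : ∀ x : H, 0 ≤ ⟪T x, x⟫) (hTne : T ≠ 0) :
    ∃ x : H, ‖x‖ = 1 ∧ T x = ‖T‖ • x := by
  have hsym : (T : H →ₗ[ℝ] H).IsSymmetric := hT.isSymmetric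
  have hnt : Nontrivial H := by
    by_contra h
    rw [not_nontrivial_iff_subsingleton] at h
    exact hTne (Subsingleton.elim _ _)
  have hn : Module.finrank ℝ H = Module.finrank ℝ H := rfl
  have hnpos : 0 < Module.finrank ℝ H := Module.finrank_pos
  haveI : Nonempty (Fin (Module.finrank ℝ H)) := Fin.pos_iff_nonempty.mp hnpos
  set b := hsym.eigenvectorBasis hn with hb
  set μ := hsym.eigenvalues hn with hμ
  have happly : ∀ i, T (b i) = μ i • b i := fun i => hsym.apply_eigenvectorBasis hn i
  have hμnonneg : ∀ i, 0 ≤ μ i := by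
    intro i
    have h := hpos (b i)
    rw [happly i, real_inner_smul_left, real_inner_self_eq_norm_sq,
      b.orthonormal.1 i] at h
    simpa using h
  obtain ⟨i₀, hi₀⟩ := Finite.exists_max μ
  have hge : μ i₀ ≤ ‖T‖ := by
    have h1 : ‖T (b i₀)‖ ≤ ‖T‖ * ‖b i₀‖ := T.le_opNorm _
    rw [happly i₀, norm_smul, b.orthonormal.1, Real.norm_eq_abs,
      abs_of_nonneg (hμnonneg i₀)] at h1
    simpa using h1
  have hle : ‖T‖ ≤ μ i₀ := by
    refine ContinuousLinearMap.opNorm_le_bound T (hμnonneg i₀) (fun v => ?_)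
    have hrepr : ∀ i, b.repr (T v) i = μ i * b.repr v i := fun i =>
      hsym.eigenvectorBasis_apply_self_apply hn v i
    have hnorm1 : ‖T v‖ ^ 2 = ∑ i, (b.repr (T v) i) ^ 2 := by
      rw [← b.repr.norm_map (T v), EuclideanSpace.norm_eq,
        Real.sq_sqrt (by positivity)]
      simp [Real.norm_eq_abs, sq_abs]
    have hnorm2 : ‖v‖ ^ 2 = ∑ i, (b.repr v i) ^ 2 := by
      rw [← b.repr.norm_map v, EuclideanSpace.norm_eq,
        Real.sq_sqrt (by positivity)]
      simp [Real.norm_eq_abs, sq_abs]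
    have hsum : ∑ i, (b.repr (T v) i) ^ 2 ≤ μ i₀ ^ 2 * ∑ i, (b.repr v i) ^ 2 := by
      rw [Finset.mul_sum]
      refine Finset.sum_le_sum (fun i _ => ?_)
      rw [hrepr i, mul_pow]
      have h1 := hμnonneg i
      have h2 := hi₀ i
      have h3 : μ i ^ 2 ≤ μ i₀ ^ 2 := by nlinarith
      exact mul_le_mul_of_nonneg_right h3 (sq_nonneg _)
    have hfinal : ‖T v‖ ^ 2 ≤ (μ i₀ * ‖v‖) ^ 2 := by
      rw [hnorm1, mul_pow, hnorm2]
      exact hsum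
    have h0 : 0 ≤ μ i₀ * ‖v‖ := mul_nonneg (hμnonneg i₀) (norm_nonneg v)
    nlinarith [norm_nonneg (T v)]
  exact ⟨b i₀, b.orthonormal.1 i₀, by rw [happly i₀, le_antisymm hle hge]⟩

end Aux

set_option maxHeartbeats 1000000 in
/-- If `P` and `Q` are orthogonal projectors on a real inner
product space whose ranges have equal finite dimension `k` and `‖P − Q‖ < 1`,
then `‖(I − P) Q‖ = ‖P − Q‖` in the operator norm. -/
theorem projector_gap_identity
    {H : Type*} [NormedAddCommGroup H] [InnerProductSpace ℝ H]
    [FiniteDimensional ℝ H]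
    (P Q : H →L[ℝ] H)
    (hPidem : P.comp P = P) (hQidem : Q.comp Q = Q)
    (hPsa : IsSelfAdjoint P) (hQsa : IsSelfAdjoint Q)
    (k : ℕ)
    (hPrank : Module.finrank ℝ (LinearMap.range (P : H →ₗ[ℝ] H)) = k)
    (hQrank : Module.finrank ℝ (LinearMap.range (Q : H →ₗ[ℝ] H)) = k)
    (hgap : ‖P - Q‖ < 1) :
    ‖(1 - P).comp Q‖ = ‖P - Q‖ := by
  have hP : P * P = P := hPidem
  have hQ : Q * Q = Q := hQidem
  have hP' : ∀ X : H →L[ℝ] H, P * (P * X) = P * X := fun X => by rw [← mul_assoc, hP]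
  have hQ' : ∀ X : H →L[ℝ] H, Q * (Q * X) = Q * X := fun X => by rw [← mul_assoc, hQ]
  rw [← ContinuousLinearMap.mul_def]
  set g : ℝ := ‖P - Q‖ with hg
  have hg0 : 0 ≤ g := norm_nonneg _
  have hRsa : IsSelfAdjoint (P - Q) := hPsa.sub hQsa
  set D : H →L[ℝ] H := (P - Q) * (P - Q) with hD_def
  have hDsa : IsSelfAdjoint D := by
    show star D = D
    rw [hD_def, StarMul.star_mul, hRsa.star_eq]
  have hDexp : D = P + Q - P * Q - Q * P := by
    rw [hD_def, sub_mul, mul_sub, mul_sub, hP, hQ]; abel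
  have hDnorm : ‖D‖ = g * g := by
    have h := CStarRing.norm_star_mul_self (x := P - Q)
    rw [hRsa.star_eq] at h
    rw [hD_def, h]
  -- D commutes with Q and P
  have hDQ : D * Q = Q - Q * (P * Q) := by
    rw [hDexp]
    simp only [sub_mul, add_mul, mul_assoc, hQ, hQ']
    abel
  have hQD : Q * D = Q - Q * (P * Q) := by
    rw [hDexp]
    simp only [mul_sub, mul_add, hQ, hQ']
    abel
  have hDP : D * P = P - P * (Q * P) := by
    rw [hDexp]
    simp only [sub_mul, add_mul, mul_assoc, hP, hP']
    abel
  have hPD : P * D = P - P * (Q * P) := by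
    rw [hDexp]
    simp only [mul_sub, mul_add, hP, hP']
    abel
  -- the adjoint computation : (star A) * A = D * Q for A = (1-P) * Q
  have h1mP : (1 - P) * (1 - P) = 1 - P := by
    rw [sub_mul, mul_sub, mul_sub, one_mul, mul_one, hP]; abel
  have h1mPsa : IsSelfAdjoint (1 - P) := (IsSelfAdjoint.one (H →L[ℝ] H)).sub hPsa
  have hstarA : star ((1 - P) * Q) * ((1 - P) * Q) = D * Q := by
    rw [StarMul.star_mul, hQsa.star_eq, h1mPsa.star_eq, hDQ]
    rw [mul_assoc Q (1 - P) ((1 - P) * Q), ← mul_assoc (1 - P) (1 - P) Q, h1mP]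
    rw [sub_mul, one_mul, mul_sub, hQ]
  have hAsq : ‖(1 - P) * Q‖ * ‖(1 - P) * Q‖ = ‖D * Q‖ := by
    rw [← hstarA]
    exact (CStarRing.norm_star_mul_self).symm
  -- upper bound
  have hub : ‖(1 - P) * Q‖ ≤ g := by
    have hA_eq : (1 - P) * Q = (1 - P) * (Q - P) := by
      rw [mul_sub]
      have h0 : (1 - P) * P = 0 := by rw [sub_mul, one_mul, hP, sub_self]
      rw [h0, sub_zero]
    rw [hA_eq]
    calc ‖(1 - P) * (Q - P)‖ ≤ ‖(1 - P)‖ * ‖Q - P‖ := norm_mul_le _ _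
      _ ≤ 1 * ‖Q - P‖ := by
          apply mul_le_mul_of_nonneg_right (aux_proj_norm_le_one _ h1mP h1mPsa)
            (norm_nonneg _)
      _ = g := by rw [one_mul, norm_sub_rev]
  -- trivial case : P = Q
  rcases eq_or_lt_of_le hg0 with hgz | hgpos
  · have hPQ : P = Q := sub_eq_zero.mp (norm_eq_zero.mp hgz.symm)
    have hA0 : (1 - P) * Q = 0 := by rw [hPQ, sub_mul, one_mul, hQ, sub_self]
    rw [hA0, norm_zero, ← hgz]
  -- main case
  have hDne : D ≠ 0 := by
    intro h
    rw [h, norm_zero] at hDnorm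
    nlinarith
  have hpos : ∀ x : H, 0 ≤ @inner ℝ _ _ (D x) x := by
    intro x
    have h := hRsa.isSymmetric ((P - Q) x) x
    simp only [ContinuousLinearMap.coe_coe] at h
    have hDx : D x = (P - Q) ((P - Q) x) := rfl
    rw [hDx, h]
    exact real_inner_self_nonneg
  obtain ⟨x, hx1, hx2⟩ := aux_top_eigenvector D hDsa hpos hDne
  rw [hDnorm] at hx2
  have hxne : x ≠ 0 := by
    intro h; rw [h, norm_zero] at hx1; exact one_ne_zero hx1.symm
  -- lower bound mechanism
  have hlow : ∀ y : H, y ≠ 0 → Q y = y → D y = (g * g) • y → g * g ≤ ‖D * Q‖ := by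
    intro y hy hQy hDy
    have h1 : ‖(D * Q) y‖ ≤ ‖D * Q‖ * ‖y‖ := (D * Q).le_opNorm y
    rw [ContinuousLinearMap.mul_apply, hQy, hDy, norm_smul, Real.norm_eq_abs,
      abs_of_nonneg (mul_nonneg hg0 hg0)] at h1
    have hy0 : 0 < ‖y‖ := norm_pos_iff.mpr hy
    exact le_of_mul_le_mul_right h1 hy0
  -- obtain a good eigenvector in the range of Q
  have hQDapp : ∀ v : H, Q (D v) = D (Q v) := by
    intro v
    have := congrArg (fun T : H →L[ℝ] H => T v) (hQD.trans hDQ.symm)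
    simpa using this
  have hQapp : ∀ v : H, Q (Q v) = Q v := by
    intro v
    have := congrArg (fun T : H →L[ℝ] H => T v) hQ
    simpa using this
  have hPapp : ∀ v : H, P (P v) = P v := by
    intro v
    have := congrArg (fun T : H →L[ℝ] H => T v) hP
    simpa using this
  have hkey : g * g ≤ ‖D * Q‖ := by
    by_cases hQx : Q x = 0
    · by_cases hQPx : Q (P x) = 0
      · exfalso
        -- D x = P x
        have hDxPx : D x = P x := by
          have h := congrArg (fun T : H →L[ℝ] H => T x) hDexp
          simp only [ContinuousLinearMap.sub_apply, ContinuousLinearMap.add_apply,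
            ContinuousLinearMap.mul_apply, hQx, hQPx, map_zero] at h
          simpa using h
        have hPx : P x = (g * g) • x := by rw [← hDxPx, hx2]
        have h2 : (g * g) • x = ((g * g) * (g * g)) • x := by
          have := hPapp x
          rw [hPx, _root_.map_smul, hPx, smul_smul] at this
          exact this.symm
        have h3 : ((g * g) - (g * g) * (g * g)) • x = 0 := by
          rw [sub_smul, ← h2, sub_self]
        have h4 : (g * g) - (g * g) * (g * g) = 0 := by
          by_contra h
          exact hxne (by simpa [h] using smul_eq_zero.mp h3 |>.resolve_left h)
        have hlt : g < 1 := hgap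
        have hgg1 : g * g < 1 := by nlinarith
        have h5 : 0 < g * g * (1 - g * g) :=
          mul_pos (mul_pos hgpos hgpos) (by linarith)
        nlinarith [h5]
      · -- use y = Q (P x)
        refine hlow (Q (P x)) hQPx (hQapp _) ?_
        have hDPx : D (P x) = (g * g) • P x := by
          have h := congrArg (fun T : H →L[ℝ] H => T x) (hDP.trans hPD.symm)
          simp only [ContinuousLinearMap.mul_apply] at h
          rw [h, hx2, _root_.map_smul]
        rw [← hQDapp, hDPx, _root_.map_smul]
    · -- use y = Q x
      refine hlow (Q x) hQx (hQapp _) ?_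
      rw [← hQDapp, hx2, _root_.map_smul]
  -- combine
  have h1 : g * g ≤ ‖(1 - P) * Q‖ * ‖(1 - P) * Q‖ := by rw [hAsq]; exact hkey
  have h2 : 0 ≤ ‖(1 - P) * Q‖ := norm_nonneg _
  nlinarith
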